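/- The bicyclic monoid B, presented by ⟨a, b | a*b = 1⟩, is not LEF. -/

import Mathlib

/-! If `e` acts as an identity on `x` and `y` in a finite semigroup and `x * y = e`, then
`y * x = e`: left multiplication by `y` is injective on `e * S`, hence onto it, and its preimage
of `e` is `x`. Mapping `{1, x, y, y * x}` into a finite semigroup therefore shows that LEF monoids
are Dedekind-finite. In `B` we have `a * b = 1` but `b * a ≠ 1`, which is seen by letting `a` act
on `ℕ` as the truncated predecessor and `b` as the successor. -/

namespace Stmt7

/-- A semigroup `S` is LEF if for every finite subset `H` of `S` there exist a finite
semigroup `F` and a function `f : S → F` injective on `H` such that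
`f (x * y) = f x * f y` whenever `x, y, x * y ∈ H`. -/
def IsLEF (S : Type*) [Semigroup S] : Prop :=
  ∀ H : Finset S, ∃ (F : Type) (_ : Semigroup F) (_ : Fintype F) (f : S → F),
    Set.InjOn f ↑H ∧
      ∀ x ∈ H, ∀ y ∈ H, x * y ∈ H → f (x * y) = f x * f y

/-- The generator `a` of the free monoid on two generators. -/
def a : FreeMonoid (Fin 2) := FreeMonoid.of 0

/-- The generator `b` of the free monoid on two generators. -/
def b : FreeMonoid (Fin 2) := FreeMonoid.of 1

/-- The defining relation `a * b = 1`. -/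
def rel : FreeMonoid (Fin 2) → FreeMonoid (Fin 2) → Prop :=
  fun x y => x = a * b ∧ y = 1

/-- The bicyclic monoid `B = ⟨a, b ∣ ab = 1⟩`. -/
def B : Type := (conGen rel).Quotient

instance : Monoid B := Con.monoid _

theorem Finite.mul_eq_symm_of_mul_eq {S : Type*} [Semigroup S] [Finite S] {e x y : S}
    (hex : e * x = x) (hxe : x * e = x) (hey : e * y = y) (hxy : x * y = e) : y * x = e := by
  set T : Set S := {z | e * z = z}
  have he : e ∈ T := show e * e = e by nth_rw 2 [← hxy]; rw [← mul_assoc, hex, hxy]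
  have hmaps : Set.MapsTo (y * ·) T T := fun z _ => show e * (y * z) = y * z by
    rw [← mul_assoc, hey]
  have hinj : Set.InjOn (y * ·) T := fun z (hz : e * z = z) w (hw : e * w = w) hzw => by
    rw [← hz, ← hw, ← hxy, mul_assoc, mul_assoc]
    exact congrArg (x * ·) hzw
  obtain ⟨c, hc : e * c = c, hyc : y * c = e⟩ :=
    ((Set.toFinite T).injOn_iff_bijOn_of_mapsTo hmaps).mp hinj |>.surjOn he
  have hxc : x = c := by
    calc x = x * (y * c) := by rw [hyc, hxe]
      _ = c := by rw [← mul_assoc, hxy, hc]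
  exact hxc ▸ hyc

theorem IsLEF.isDedekindFiniteMonoid {M : Type*} [Monoid M] (hM : IsLEF M) :
    IsDedekindFiniteMonoid M where
  mul_eq_one_symm {x y} hxy := by
    classical
    obtain ⟨F, _, _, f, hinj, hf⟩ := hM {1, x, y, y * x}
    have hfx : f 1 * f x = f x := by simpa using (hf 1 (by simp) x (by simp) (by simp)).symm
    have hxf : f x * f 1 = f x := by simpa using (hf x (by simp) 1 (by simp) (by simp)).symm
    have hfy : f 1 * f y = f y := by simpa using (hf 1 (by simp) y (by simp) (by simp)).symm
    have hfxy : f x * f y = f 1 := by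
      simpa [hxy] using (hf x (by simp) y (by simp) (by simp [hxy])).symm
    have hfyx : f (y * x) = f 1 :=
      (hf y (by simp) x (by simp) (by simp)).trans
        (Finite.mul_eq_symm_of_mul_eq hfx hxf hfy hfxy)
    exact hinj (by simp) (by simp) hfyx

def toB : FreeMonoid (Fin 2) →* B := (conGen rel).mk'

theorem toB_a_mul_toB_b : toB a * toB b = 1 := by
  rw [← map_mul, ← map_one toB]
  exact (Con.eq _).2 (ConGen.Rel.of _ _ ⟨rfl, rfl⟩)

noncomputable def natAction : B →* Function.End ℕ :=
  (conGen rel).lift (FreeMonoid.lift ![fun n => n - 1, Nat.succ]) <| Con.conGen_le.2 <| by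
    rintro _ _ ⟨rfl, rfl⟩
    funext n
    exact Nat.add_sub_cancel n 1

theorem toB_b_mul_toB_a_ne_one : toB b * toB a ≠ 1 := by
  intro h
  have h0 : natAction (toB b * toB a) 0 = natAction 1 0 := by rw [h]
  change (0 - 1).succ = 0 at h0
  exact Nat.succ_ne_zero _ h0

/-- The bicyclic monoid `B = ⟨a, b ∣ ab = 1⟩` is not LEF. -/
theorem bicyclic_not_isLEF : ¬ IsLEF B := fun h =>
  have := h.isDedekindFiniteMonoid
  toB_b_mul_toB_a_ne_one (mul_eq_one_symm toB_a_mul_toB_b)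

end Stmt7
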